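/- arXiv:2406.05095 — 2 statements merged into one kernel-verified Lean document; each statement's English description precedes it below -/
import Mathlib

section
/- Let G be a loopless multigraph and F : V(G) → finite sets of naturals with |F(v)| < d(v)/2 for all v. If G has no F-avoiding orientation and |E(G)| is minimum among such counterexamples, then for every vertex v of even degree and every neighbor u of v, neither 0 nor d_G(u) belongs to F(u). -/
attribute [local instance] Classical.propDecidable

/-- A loopless multigraph: edges indexed by `E` with endpoints in `Sym2 V`. -/
structure Multigraph (V E : Type) where
  ends : E → Sym2 V
  loopless : ∀ e, ¬ (ends e).IsDiag

namespace Multigraph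

variable {V E : Type}

/-- Degree of a vertex: number of edges incident to it. -/
noncomputable def deg [Fintype E] (G : Multigraph V E) (v : V) : ℕ :=
  (Finset.univ.filter fun e => v ∈ G.ends e).card

/-- Two vertices are adjacent if some edge joins them. -/
def Adj (G : Multigraph V E) (u v : V) : Prop :=
  u ≠ v ∧ ∃ e, G.ends e = s(u, v)

/-- An orientation assigns a tail and head to each edge, consistent with its endpoints. -/
structure Orientation (G : Multigraph V E) where
  tail : E → V
  head : E → V
  consistent : ∀ e, G.ends e = s(tail e, head e)

/-- Out-degree of a vertex in an orientation. -/
noncomputable def Orientation.outDeg [Fintype E] {G : Multigraph V E} (D : G.Orientation)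
    (v : V) : ℕ :=
  (Finset.univ.filter fun e => D.tail e = v).card

/-- An orientation is `F`-avoiding if no vertex has out-degree in its forbidden list. -/
def Orientation.Avoids [Fintype E] {G : Multigraph V E} (D : G.Orientation)
    (F : V → Finset ℕ) : Prop :=
  ∀ v, D.outDeg v ∉ F v

/-- Number of edges with both endpoints in `S`. -/
noncomputable def eIn [Fintype E] (G : Multigraph V E) (S : Finset V) : ℕ :=
  (Finset.univ.filter fun e => ∀ w ∈ G.ends e, w ∈ S).card

/-- Number of edges with exactly one endpoint in `S`. -/
noncomputable def cut [Fintype E] (G : Multigraph V E) (S : Finset V) : ℕ :=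
  (Finset.univ.filter fun e => (∃ w ∈ G.ends e, w ∈ S) ∧ ¬ ∀ w ∈ G.ends e, w ∈ S).card

/-- Reachability by directed paths in an orientation. -/
def Orientation.Reach {G : Multigraph V E} (D : G.Orientation) : V → V → Prop :=
  Relation.ReflTransGen fun a b => ∃ e, D.tail e = a ∧ D.head e = b

end Multigraph

/-! Delete an edge `uv` and orient it back at the end. If `0 ∈ F u`, orient `uv` out of `u` and
forbid at `u` the shifted list `{k | k + 1 ∈ F u}`, which is shorter since `0` drops out. If
`d(u) ∈ F u`, orient `uv` into `u`: out-degree `d(u)` is then out of reach, so it can be dropped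
from `F u`, and `v` gets the shifted list of `F v`. Either way `d(v)` falls by one, which
`2 |F v| < d(v)` survives because `d(v)` is even; minimality gives an avoiding orientation of
`G - uv`, and it extends to `G`. -/

-- The forbidden list seen in `G.delete e` by the tail of `e`, whose out-degree there is one less.
noncomputable def shiftDown (S : Finset ℕ) : Finset ℕ :=
  S.preimage (· + 1) (add_left_injective 1).injOn

@[simp]
lemma mem_shiftDown {S : Finset ℕ} {n : ℕ} : n ∈ shiftDown S ↔ n + 1 ∈ S :=
  Finset.mem_preimage

lemma card_shiftDown_le (S : Finset ℕ) : (shiftDown S).card ≤ S.card :=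
  Finset.card_le_card_of_injOn (· + 1) (fun _ hn => mem_shiftDown.mp hn)
    (add_left_injective 1).injOn

lemma card_shiftDown_lt {S : Finset ℕ} (h : 0 ∈ S) : (shiftDown S).card < S.card := by
  have hle : (shiftDown S).card ≤ (S.erase 0).card :=
    Finset.card_le_card_of_injOn (· + 1)
      (fun n hn => Finset.mem_erase.mpr ⟨n.succ_ne_zero, mem_shiftDown.mp hn⟩)
      (add_left_injective 1).injOn
  rw [Finset.card_erase_of_mem h] at hle
  have := Finset.card_pos.mpr ⟨0, h⟩
  omega

namespace Multigraph

section

variable {V E : Type}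

def delete (G : Multigraph V E) (e : E) : Multigraph V {f : E // f ≠ e} where
  ends f := G.ends f.1
  loopless f := G.loopless f.1

noncomputable def Orientation.extend {G : Multigraph V E} {e : E} {a b : V}
    (hab : G.ends e = s(a, b)) (D : (G.delete e).Orientation) : G.Orientation where
  tail f := if h : f = e then a else D.tail ⟨f, h⟩
  head f := if h : f = e then b else D.head ⟨f, h⟩
  consistent f := by
    by_cases h : f = e
    · subst h; simp [hab]
    · simpa [h, delete] using D.consistent ⟨f, h⟩

lemma ne_of_ends_eq {G : Multigraph V E} {e : E} {u v : V} (he : G.ends e = s(u, v)) :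
    u ≠ v := by
  rintro rfl
  exact G.loopless e (he ▸ Sym2.mk_isDiag_iff.mpr rfl)

end

variable {V E : Type} [Fintype E]

lemma card_filter_ne_add_ite (e : E) (p : E → Prop) [DecidablePred p] :
    (Finset.univ.filter fun f : {f : E // f ≠ e} => p f.1).card + (if p e then 1 else 0)
      = (Finset.univ.filter p).card := by
  have hsub : (Finset.univ.filter fun f : {f : E // f ≠ e} => p f.1)
      = (Finset.univ.filter p).subtype (· ≠ e) := by
    ext f; simp
  rw [hsub, Finset.card_subtype, Finset.filter_ne']
  split_ifs with hp
  · exact Finset.card_erase_add_one (by simpa using hp)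
  · rw [Finset.erase_eq_of_notMem (by simpa using hp), add_zero]

lemma deg_delete_add_ite (G : Multigraph V E) (e : E) (w : V) :
    (G.delete e).deg w + (if w ∈ G.ends e then 1 else 0) = G.deg w :=
  card_filter_ne_add_ite e (fun f => w ∈ G.ends f)

lemma deg_delete_add_one {G : Multigraph V E} {e : E} {w : V} (hw : w ∈ G.ends e) :
    (G.delete e).deg w + 1 = G.deg w := by
  simpa [hw] using deg_delete_add_ite G e w

lemma deg_delete_of_notMem {G : Multigraph V E} {e : E} {w : V} (hw : w ∉ G.ends e) :
    (G.delete e).deg w = G.deg w := by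
  simpa [hw] using deg_delete_add_ite G e w

lemma Orientation.outDeg_le_deg {G : Multigraph V E} (D : G.Orientation) (w : V) :
    D.outDeg w ≤ G.deg w := by
  apply Finset.card_le_card
  intro f hf
  simp only [Finset.mem_filter, Finset.mem_univ, true_and] at hf ⊢
  rw [D.consistent f, Sym2.mem_iff]
  exact Or.inl hf.symm

lemma Orientation.outDeg_extend {G : Multigraph V E} {e : E} {a b : V}
    (hab : G.ends e = s(a, b)) (D : (G.delete e).Orientation) (w : V) :
    (D.extend hab).outDeg w = D.outDeg w + (if a = w then 1 else 0) := by
  have h := card_filter_ne_add_ite e (fun f => (D.extend hab).tail f = w)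
  have htail_e : (D.extend hab).tail e = a := dif_pos rfl
  have htail : ∀ f : {f : E // f ≠ e}, (D.extend hab).tail f = D.tail f := fun f => dif_neg f.2
  simp only [htail, htail_e] at h
  exact h.symm

lemma Orientation.Avoids.extend {G : Multigraph V E} {F : V → Finset ℕ} {e : E} {a b : V}
    (hab : G.ends e = s(a, b)) {F' : V → Finset ℕ} {D : (G.delete e).Orientation}
    (hD : D.Avoids F') (ha : shiftDown (F a) ⊆ F' a)
    (hw : ∀ w ≠ a, ∀ n ≤ (G.delete e).deg w, n ∈ F w → n ∈ F' w) :
    (D.extend hab).Avoids F := by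
  intro w hmem
  rw [D.outDeg_extend hab w] at hmem
  by_cases h : a = w
  · subst h
    rw [if_pos rfl] at hmem
    exact hD a (ha (mem_shiftDown.mpr hmem))
  · rw [if_neg h, add_zero] at hmem
    exact hD w (hw w (Ne.symm h) _ (D.outDeg_le_deg w) hmem)

lemma card_lt_deg_delete {G : Multigraph V E} {F F' : V → Finset ℕ} {e : E}
    (hF : ∀ w, 2 * (F w).card < G.deg w) (hF'_of_notMem : ∀ w ∉ G.ends e, F' w = F w)
    (hF'_of_mem : ∀ w ∈ G.ends e, 2 * (F' w).card + 2 ≤ G.deg w) (w : V) :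
    2 * (F' w).card < (G.delete e).deg w := by
  by_cases hw : w ∈ G.ends e
  · have := deg_delete_add_one hw
    have := hF'_of_mem w hw
    omega
  · rw [deg_delete_of_notMem hw, hF'_of_notMem w hw]
    exact hF w

section Critical

variable {G : Multigraph V E} {F : V → Finset ℕ} {e : E} {u v : V}

lemma zero_notMem_of_critical (he : G.ends e = s(u, v)) (hF : ∀ w, 2 * (F w).card < G.deg w)
    (hv : 2 * (F v).card + 2 ≤ G.deg v) (hno : ¬ ∃ D : G.Orientation, D.Avoids F)
    (hdel : ∀ F' : V → Finset ℕ, (∀ w, 2 * (F' w).card < (G.delete e).deg w) →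
      ∃ D : (G.delete e).Orientation, D.Avoids F') :
    0 ∉ F u := by
  intro h0
  have hvu : v ≠ u := (ne_of_ends_eq he).symm
  let F' := Function.update F u (shiftDown (F u))
  have hmem : ∀ w, w ∈ G.ends e ↔ w = u ∨ w = v := fun w => by rw [he, Sym2.mem_iff]
  obtain ⟨D, hD⟩ := hdel F' <| card_lt_deg_delete hF
    (fun w hw => Function.update_of_ne (by rw [hmem] at hw; tauto) _ _)
    (fun w hw => by
      obtain rfl | rfl := (hmem w).mp hw
      · have := card_shiftDown_lt h0
        have := hF w
        simp only [F', Function.update_self]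
        omega
      · simpa only [F', Function.update_of_ne hvu] using hv)
  refine hno ⟨D.extend he, hD.extend he (by simp [F']) fun w hw n _ hn => ?_⟩
  simpa only [F', Function.update_of_ne hw] using hn

lemma deg_notMem_of_critical (he : G.ends e = s(u, v)) (hF : ∀ w, 2 * (F w).card < G.deg w)
    (hv : 2 * (F v).card + 2 ≤ G.deg v) (hno : ¬ ∃ D : G.Orientation, D.Avoids F)
    (hdel : ∀ F' : V → Finset ℕ, (∀ w, 2 * (F' w).card < (G.delete e).deg w) →
      ∃ D : (G.delete e).Orientation, D.Avoids F') :
    G.deg u ∉ F u := by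
  intro hdeg
  have huv : u ≠ v := ne_of_ends_eq he
  have hvu : G.ends e = s(v, u) := he.trans Sym2.eq_swap
  let F' := Function.update (Function.update F u ((F u).erase (G.deg u))) v (shiftDown (F v))
  have hF'u : F' u = (F u).erase (G.deg u) := by simp [F', huv]
  have hmem : ∀ w, w ∈ G.ends e ↔ w = u ∨ w = v := fun w => by rw [he, Sym2.mem_iff]
  obtain ⟨D, hD⟩ := hdel F' <| card_lt_deg_delete hF
    (fun w hw => by rw [hmem, not_or] at hw; simp [F', hw.1, hw.2])
    (fun w hw => by
      obtain rfl | rfl := (hmem w).mp hw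
      · have := Finset.card_erase_of_mem hdeg
        have := Finset.card_pos.mpr ⟨_, hdeg⟩
        have := hF w
        rw [hF'u]
        omega
      · have := card_shiftDown_le (F w)
        simp only [F', Function.update_self]
        omega)
  refine hno ⟨D.extend hvu, hD.extend hvu (by simp [F']) fun w hw n hn hnF => ?_⟩
  by_cases hwu : w = u
  · subst hwu
    have := deg_delete_add_one ((hmem w).mpr (Or.inl rfl))
    rw [hF'u]
    exact Finset.mem_erase.mpr ⟨by omega, hnF⟩
  · simpa [F', hw, hwu] using hnF

end Critical

end Multigraph

theorem stmt1 {V E : Type} [Fintype E] (G : Multigraph V E) (F : V → Finset ℕ)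
    (hF : ∀ v, 2 * (F v).card < G.deg v)
    (hno : ¬ ∃ D : G.Orientation, D.Avoids F)
    (hmin : ∀ (V' E' : Type) [Fintype E'] (G' : Multigraph V' E') (F' : V' → Finset ℕ),
      Fintype.card E' < Fintype.card E → (∀ v, 2 * (F' v).card < G'.deg v) →
      ∃ D : G'.Orientation, D.Avoids F') :
    ∀ v u : V, Even (G.deg v) → G.Adj u v → 0 ∉ F u ∧ G.deg u ∉ F u := by
  rintro v u ⟨k, hk⟩ ⟨-, e, he⟩
  have hv : 2 * (F v).card + 2 ≤ G.deg v := by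
    have := hF v
    omega
  have hdel : ∀ F' : V → Finset ℕ, (∀ w, 2 * (F' w).card < (G.delete e).deg w) →
      ∃ D : (G.delete e).Orientation, D.Avoids F' :=
    fun F' => hmin V _ (G.delete e) F' (Fintype.card_subtype_lt (x := e) (by simp))
  exact ⟨Multigraph.zero_notMem_of_critical he hF hv hno hdel,
    Multigraph.deg_notMem_of_critical he hF hv hno hdel⟩
end

section
/- Let G be a graph and F : V(G) → 2^ℕ with |F(v)| ≤ d(v)/2 for all v. Suppose for each v there exist ℓ(v) ≤ u(v) with F(v) = {0,…,ℓ(v)−1} ∪ {u(v)+1,…,d(v)} (i.e., the allowed out-degrees form a single interval [ℓ(v), u(v)]). Then G admits an F-avoiding orientation. -/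
attribute [local instance] Classical.propDecidable

/-! Since `|F(v)| ≤ d(v)/2`, we have `2ℓ(v) ≤ d(v) ≤ 2u(v)`, so every balanced orientation
(`|d⁺(v) - d⁻(v)| ≤ 1` at every vertex) avoids `F`. Balanced orientations exist: take one
minimising `∑ᵥ |d⁺(v) - d⁻(v)|`. If `d⁺(v) ≥ d⁻(v) + 2`, the set of vertices reachable from `v`
has no edge leaving it, so it carries at least as many in- as out-degrees and contains a `w`
with `d⁺(w) < d⁻(w)`; reversing a directed walk from `v` to `w` lowers the sum. The case
`d⁻(v) ≥ d⁺(v) + 2` is the same in the reversed orientation. -/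

namespace Multigraph.Orientation

open Finset

variable {V E : Type} {G : Multigraph V E}

lemma tail_ne_head (D : G.Orientation) (e : E) : D.tail e ≠ D.head e := fun h =>
  G.loopless e (by rw [D.consistent e, Sym2.mk_isDiag_iff]; exact h)

lemma mem_ends_iff (D : G.Orientation) (e : E) (x : V) :
    x ∈ G.ends e ↔ D.tail e = x ∨ D.head e = x := by
  rw [D.consistent e, Sym2.mem_iff, eq_comm, @eq_comm _ x]

instance : Nonempty G.Orientation :=
  ⟨⟨fun e => (G.ends e).out.1, fun e => (G.ends e).out.2, fun _ => (Quot.out_eq _).symm⟩⟩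

def rev (D : G.Orientation) : G.Orientation where
  tail := D.head
  head := D.tail
  consistent e := by rw [D.consistent e, Sym2.eq_swap]

noncomputable def flip (D : G.Orientation) (e : E) : G.Orientation where
  tail := Function.update D.tail e (D.head e)
  head := Function.update D.head e (D.tail e)
  consistent e' := by
    rcases eq_or_ne e' e with rfl | h
    · simp [D.consistent e', Sym2.eq_swap]
    · simp [h, D.consistent e']

section Degree

variable [Fintype E]

lemma outDeg_add_outDeg_rev (D : G.Orientation) (v : V) :
    D.outDeg v + D.rev.outDeg v = G.deg v := by
  unfold outDeg deg
  rw [← card_union_of_disjoint, ← filter_or]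
  · simp only [mem_ends_iff D, rev]
    congr! 1
  · exact disjoint_filter.2 fun e _ h h' => D.tail_ne_head e (h.trans h'.symm)

lemma outDeg_flip_add (D : G.Orientation) (e : E) (x : V) :
    (D.flip e).outDeg x + (if D.tail e = x then 1 else 0) =
      D.outDeg x + (if D.head e = x then 1 else 0) := by
  have hflip : (D.flip e).tail = Function.update D.tail e (D.head e) := rfl
  simp only [outDeg, card_filter, Fintype.sum_eq_add_sum_compl e, hflip, Function.update_self]
  rw [sum_congr rfl fun e' he' => by rw [Function.update_of_ne (by simpa using he')]]
  omega

lemma card_filter_tail_mem (D : G.Orientation) (S : Finset V) :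
    #{e | D.tail e ∈ S} = ∑ v ∈ S, D.outDeg v :=
  (sum_card_fiberwise_eq_card_filter _ _ _).symm

lemma two_mul_sum_outDeg_le_sum_deg (D : G.Orientation) (S : Finset V)
    (hS : ∀ e, D.tail e ∈ S → D.head e ∈ S) :
    2 * ∑ v ∈ S, D.outDeg v ≤ ∑ v ∈ S, G.deg v := by
  have : ∑ v ∈ S, D.outDeg v ≤ ∑ v ∈ S, D.rev.outDeg v := by
    rw [← card_filter_tail_mem, ← card_filter_tail_mem]
    exact card_le_card fun e he => by simp only [mem_filter] at he ⊢; exact ⟨he.1, hS e he.2⟩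
  simp only [← outDeg_add_outDeg_rev D, sum_add_distrib]
  omega

end Degree

def IsWalk (D : G.Orientation) : V → List E → V → Prop
  | v, [], w => v = w
  | v, e :: es, w => D.tail e = v ∧ D.IsWalk (D.head e) es w

lemma IsWalk.exists_of_append {D : G.Orientation} {v w : V} {p q : List E}
    (h : D.IsWalk v (p ++ q) w) : ∃ m, D.IsWalk m q w := by
  induction p generalizing v with
  | nil => exact ⟨v, h⟩
  | cons e p ih => exact ih h.2

lemma IsWalk.flip {D : G.Orientation} {v w : V} {es : List E} {e : E}
    (h : D.IsWalk v es w) (he : e ∉ es) : (D.flip e).IsWalk v es w := by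
  induction es generalizing v with
  | nil => exact h
  | cons f es ih =>
    have hf : f ≠ e := fun hfe => he (hfe ▸ List.mem_cons_self)
    refine ⟨?_, ?_⟩
    · simpa [Orientation.flip, hf] using h.1
    · simpa [Orientation.flip, hf] using ih h.2 (fun h' => he (List.mem_cons_of_mem f h'))

lemma exists_isWalk_of_reach {D : G.Orientation} {v w : V} (h : D.Reach v w) :
    ∃ es, D.IsWalk v es w := by
  induction h using Relation.ReflTransGen.head_induction_on with
  | refl => exact ⟨[], rfl⟩
  | head hstep _ ih =>
    obtain ⟨e, rfl, rfl⟩ := hstep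
    obtain ⟨es, hes⟩ := ih
    exact ⟨e :: es, rfl, hes⟩

lemma exists_outDeg_add_eq_of_isWalk [Fintype E] {D : G.Orientation} {v w : V} {es : List E}
    (h : D.IsWalk v es w) :
    ∃ D' : G.Orientation, ∀ x, D'.outDeg x + (if v = x then 1 else 0) =
      D.outDeg x + (if w = x then 1 else 0) := by
  induction hn : es.length using Nat.strong_induction_on generalizing D v es with
  | _ n ih =>
    cases es with
    | nil => exact ⟨D, fun x => by rw [show v = w from h]⟩
    | cons e es =>
      obtain ⟨rfl, h⟩ := h
      by_cases he : e ∈ es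
      · -- a walk that uses its first edge `e` again is cut short at that second use
        obtain ⟨p, r, rfl⟩ := List.append_of_mem he
        obtain ⟨_, -, hr⟩ := h.exists_of_append
        exact ih (r.length + 1) (by simp [← hn]) (es := e :: r) ⟨rfl, hr⟩ rfl
      · obtain ⟨D', hD'⟩ := ih es.length (by simp [← hn]) (h.flip he) rfl
        refine ⟨D', fun x => ?_⟩
        have hflip := D.outDeg_flip_add e x
        have hx := hD' x
        split_ifs at hflip hx ⊢ <;> omega

section Imbalance

variable [Fintype V] [Fintype E]

lemma exists_reach_two_mul_outDeg_lt (D : G.Orientation) {v : V}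
    (hv : G.deg v < 2 * D.outDeg v) : ∃ w, D.Reach v w ∧ 2 * D.outDeg w < G.deg w := by
  by_contra! h
  set S : Finset V := {w | D.Reach v w}
  have hclosed := D.two_mul_sum_outDeg_le_sum_deg S fun e he => by
    simp only [S, mem_filter, mem_univ, true_and] at he ⊢
    exact he.tail ⟨e, rfl, rfl⟩
  have hlt : ∑ w ∈ S, G.deg w < ∑ w ∈ S, 2 * D.outDeg w :=
    sum_lt_sum (fun w hw => h w (by simpa [S] using hw)) ⟨v, mem_filter.2 ⟨mem_univ v, .refl⟩, hv⟩
  rw [← mul_sum] at hlt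
  omega

/-- `∑ᵥ |d⁺(v) - d⁻(v)|`, using `d⁻ = d - d⁺`. -/
noncomputable def imbalance (D : G.Orientation) : ℕ :=
  ∑ v, (2 * (D.outDeg v : ℤ) - G.deg v).natAbs

lemma imbalance_rev (D : G.Orientation) : D.rev.imbalance = D.imbalance :=
  sum_congr rfl fun v _ => by have := D.outDeg_add_outDeg_rev v; omega

lemma imbalance_lt {D D' : G.Orientation} {v w : V}
    (hD' : ∀ x, D'.outDeg x + (if v = x then 1 else 0) = D.outDeg x + (if w = x then 1 else 0))
    (hv : G.deg v + 1 < 2 * D.outDeg v) (hw : 2 * D.outDeg w < G.deg w) :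
    D'.imbalance < D.imbalance := by
  have hvw : v ≠ w := by rintro rfl; omega
  refine sum_lt_sum (fun x _ => ?_) ⟨v, mem_univ v, ?_⟩
  · have := hD' x
    split_ifs at this <;> subst_vars <;> omega
  · have := hD' v
    rw [if_pos rfl, if_neg hvw.symm] at this
    omega

lemma exists_imbalance_lt (D : G.Orientation) {v : V} (hv : G.deg v + 1 < 2 * D.outDeg v) :
    ∃ D' : G.Orientation, D'.imbalance < D.imbalance := by
  obtain ⟨w, hvw, hw⟩ := D.exists_reach_two_mul_outDeg_lt (v := v) (by omega)
  obtain ⟨es, hes⟩ := exists_isWalk_of_reach hvw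
  obtain ⟨D', hD'⟩ := exists_outDeg_add_eq_of_isWalk hes
  exact ⟨D', imbalance_lt hD' hv hw⟩

end Imbalance

end Multigraph.Orientation

namespace Multigraph

theorem exists_balanced_orientation {V E : Type} [Fintype V] [Fintype E] (G : Multigraph V E) :
    ∃ D : G.Orientation, ∀ v, G.deg v ≤ 2 * D.outDeg v + 1 ∧ 2 * D.outDeg v ≤ G.deg v + 1 := by
  set D := Function.argmin (Orientation.imbalance (G := G))
  refine ⟨D, fun v => ⟨?_, ?_⟩⟩
  · by_contra! h
    have hrev := D.outDeg_add_outDeg_rev v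
    obtain ⟨D', hD'⟩ := D.rev.exists_imbalance_lt (v := v) (by omega)
    rw [Orientation.imbalance_rev] at hD'
    exact Function.not_lt_argmin _ D' hD'
  · by_contra! h
    obtain ⟨D', hD'⟩ := D.exists_imbalance_lt h
    exact Function.not_lt_argmin _ D' hD'

end Multigraph

theorem stmt10_general {V E : Type} [Fintype V] [Fintype E] (G : Multigraph V E)
    (F : V → Finset ℕ) (l u : V → ℕ)
    (hform : ∀ v, F v = Finset.range (l v) ∪ Finset.Icc (u v + 1) (G.deg v))
    (hF : ∀ v, 2 * (F v).card ≤ G.deg v) :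
    ∃ D : G.Orientation, D.Avoids F := by
  obtain ⟨D, hD⟩ := G.exists_balanced_orientation
  refine ⟨D, fun v hv => ?_⟩
  have hl : l v ≤ (F v).card := by
    rw [hform v]
    exact (Finset.card_range (l v)).ge.trans (Finset.card_le_card Finset.subset_union_left)
  have hu : G.deg v - u v ≤ (F v).card := by
    rw [hform v, show G.deg v - u v = (Finset.Icc (u v + 1) (G.deg v)).card by simp]
    exact Finset.card_le_card Finset.subset_union_right
  simp only [hform v, Finset.mem_union, Finset.mem_range, Finset.mem_Icc] at hv
  have := hD v
  have := hF v
  omega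

/-- if each list of forbidden out-degrees is the complement in
`{0,…,d(v)}` of an interval `[l v, u v]` and `|F(v)| ≤ d(v)/2`, then `G` admits an
`F`-avoiding orientation. -/
theorem stmt10 {V E : Type} [Fintype V] [Fintype E] (G : Multigraph V E)
    (F : V → Finset ℕ) (l u : V → ℕ)
    (hlu : ∀ v, l v ≤ u v)
    (hform : ∀ v, F v = Finset.range (l v) ∪ Finset.Icc (u v + 1) (G.deg v))
    (hF : ∀ v, 2 * (F v).card ≤ G.deg v) :
    ∃ D : G.Orientation, D.Avoids F :=
  stmt10_general G F l u hform hF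
end
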